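/- The derivative of the pointwise distortion δ(s) := Σ_{l∈ℤ} ∫_{l-s-1/2}^{l-s+1/2} (n - l)² φ_σ(n) dn with respect to s equals 2s Σ_{l∈ℤ} φ_σ(l - s + 1/2). In particular, sign(δ'(s)) = sign(s). -/

import Mathlib

/-!
Differentiating the `l`-th term by the fundamental theorem of calculus gives
`(s + 1/2)² φ_σ(l - s - 1/2) - (s - 1/2)² φ_σ(l - s + 1/2)`. For `s` in a bounded interval these
derivatives are dominated by a multiple of `e^{-|l|}`, so the series may be differentiated
termwise. Reindexing `l ↦ l + 1` turns `Σ φ_σ(l - s - 1/2)` into `Σ φ_σ(l - s + 1/2)`, so the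
derivative is `((s + 1/2)² - (s - 1/2)²) Σ φ_σ(l - s + 1/2) = 2s Σ φ_σ(l - s + 1/2)`, and the
sum is positive.
-/

open MeasureTheory intervalIntegral

/-- Density `φ_σ` of `N(0, σ²)`. -/
noncomputable def gpdf (σ x : ℝ) : ℝ :=
  (Real.sqrt (2 * Real.pi) * σ)⁻¹ * Real.exp (-(x ^ 2) / (2 * σ ^ 2))

/-- Standard normal pdf `ψ`. -/
noncomputable def stdpdf (x : ℝ) : ℝ := (Real.sqrt (2 * Real.pi))⁻¹ * Real.exp (-(x ^ 2) / 2)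

/-- Standard normal cdf `Φ`. -/
noncomputable def stdcdf (x : ℝ) : ℝ := ∫ t in Set.Iic x, stdpdf t

theorem Real.sign_mul_of_pos_right {c : ℝ} (hc : 0 < c) (x : ℝ) :
    Real.sign (x * c) = Real.sign x := by
  rcases lt_trichotomy x 0 with hx | rfl | hx
  · rw [Real.sign_of_neg hx, Real.sign_of_neg (mul_neg_of_neg_of_pos hx hc)]
  · rw [zero_mul]
  · rw [Real.sign_of_pos hx, Real.sign_of_pos (mul_pos hx hc)]

theorem summable_exp_neg_abs_int : Summable fun l : ℤ => Real.exp (-|(l : ℝ)|) := by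
  apply Summable.of_nat_of_neg <;>
    refine Real.summable_exp_neg_nat.congr fun n => ?_ <;> simp

theorem hasDerivAt_integral_of_hasDerivAt_bounds {E : Type*} [NormedAddCommGroup E]
    [NormedSpace ℝ E] [CompleteSpace E] {g : ℝ → E} (hg : Continuous g) {a b : ℝ → ℝ}
    {a' b' t : ℝ} (ha : HasDerivAt a a' t) (hb : HasDerivAt b b' t) :
    HasDerivAt (fun t => ∫ x in a t..b t, g x) (b' • g (b t) - a' • g (a t)) t := by
  have hG (x : ℝ) : HasDerivAt (fun u => ∫ x in (0 : ℝ)..u, g x) (g x) x :=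
    (hg.integral_hasStrictDerivAt 0 x).hasDerivAt
  refine ((hG (b t)).scomp t hb |>.sub ((hG (a t)).scomp t ha)).congr_of_eventuallyEq
    (Filter.Eventually.of_forall fun u => ?_)
  exact (integral_interval_sub_left (hg.intervalIntegrable _ _) (hg.intervalIntegrable _ _)).symm

section Gaussian

variable {σ : ℝ}

theorem gpdf_pos (hσ : 0 < σ) (x : ℝ) : 0 < gpdf σ x := by
  unfold gpdf
  positivity

@[fun_prop]
theorem continuous_gpdf (σ : ℝ) : Continuous (gpdf σ) := by
  unfold gpdf
  fun_prop

noncomputable def gpdfMajorant (σ B x : ℝ) : ℝ :=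
  (Real.sqrt (2 * Real.pi) * σ)⁻¹ * Real.exp (σ ^ 2 + B ^ 2 / (2 * σ ^ 2)) * Real.exp (-|x|)

theorem summable_gpdfMajorant (σ B : ℝ) :
    Summable fun l : ℤ => gpdfMajorant σ B l :=
  summable_exp_neg_abs_int.mul_left _

theorem gpdf_sub_le_gpdfMajorant (hσ : 0 < σ) {B w : ℝ} (hw : |w| ≤ B) (x : ℝ) :
    gpdf σ (x - w) ≤ gpdfMajorant σ B x := by
  unfold gpdf gpdfMajorant
  rw [mul_assoc, ← Real.exp_add]
  gcongr
  rw [show σ ^ 2 + B ^ 2 / (2 * σ ^ 2) + -|x| = (2 * σ ^ 4 + B ^ 2 - 2 * σ ^ 2 * |x|) / (2 * σ ^ 2)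
    by field_simp; ring]
  gcongr
  -- `(x - w)² ≥ x²/2 - w²` and `x²/2 ≥ 2σ²|x| - 2σ⁴`
  nlinarith [sq_nonneg (x - 2 * w), sq_nonneg (|x| - 2 * σ ^ 2), sq_abs x, sq_abs w,
    pow_le_pow_left₀ (abs_nonneg w) hw 2]

theorem sq_mul_gpdf_sub_le (hσ : 0 < σ) {B w : ℝ} (hw : |w| ≤ B) (x : ℝ) :
    ‖w ^ 2 * gpdf σ (x - w)‖ ≤ B ^ 2 * gpdfMajorant σ B x := by
  rw [norm_mul, norm_pow, Real.norm_eq_abs, Real.norm_of_nonneg (gpdf_pos hσ _).le]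
  exact mul_le_mul (pow_le_pow_left₀ (abs_nonneg w) hw 2)
    (gpdf_sub_le_gpdfMajorant hσ hw x) (gpdf_pos hσ _).le (by positivity)

theorem summable_gpdf_sub (hσ : 0 < σ) (w : ℝ) : Summable fun l : ℤ => gpdf σ (l - w) :=
  (summable_gpdfMajorant σ |w|).of_nonneg_of_le (fun _ => (gpdf_pos hσ _).le)
    fun l => gpdf_sub_le_gpdfMajorant hσ le_rfl l

end Gaussian

theorem tsum_int_comp_sub_add_one {M : Type*} [AddCommMonoid M] [TopologicalSpace M]
    (f : ℝ → M) (w : ℝ) : ∑' l : ℤ, f (l - (w + 1)) = ∑' l : ℤ, f (l - w) := by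
  rw [← (Equiv.addRight (1 : ℤ)).tsum_eq]
  refine tsum_congr fun l => congrArg f ?_
  push_cast [Equiv.coe_addRight]
  ring

section Distortion

variable {σ : ℝ}

noncomputable def distortion (σ t : ℝ) : ℝ :=
  ∑' l : ℤ, ∫ n in (l - t - 1 / 2 : ℝ)..(l - t + 1 / 2 : ℝ), (n - l) ^ 2 * gpdf σ n

theorem norm_distortion_term_le (hσ : 0 < σ) (l : ℤ) (t : ℝ) :
    ‖∫ n in (l - t - 1 / 2 : ℝ)..(l - t + 1 / 2 : ℝ), (n - l) ^ 2 * gpdf σ n‖ ≤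
      (|t| + 1 / 2) ^ 2 * gpdfMajorant σ (|t| + 1 / 2) l := by
  have hbound : ∀ n ∈ Set.uIoc (l - t - 1 / 2 : ℝ) (l - t + 1 / 2),
      ‖(n - l) ^ 2 * gpdf σ n‖ ≤ (|t| + 1 / 2) ^ 2 * gpdfMajorant σ (|t| + 1 / 2) l := by
    intro n hn
    rw [Set.uIoc_of_le (by linarith)] at hn
    have hw : |l - n| ≤ |t| + 1 / 2 := by
      rw [abs_le]; constructor <;> linarith [hn.1, hn.2, le_abs_self t, neg_abs_le t]
    simpa [sub_sub_cancel, neg_sub, sq_abs, ← neg_sq (n - l)] using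
      sq_mul_gpdf_sub_le hσ hw l
  refine (norm_integral_le_of_norm_le_const hbound).trans_eq ?_
  rw [show (l - t + 1 / 2 : ℝ) - (l - t - 1 / 2) = 1 by ring, abs_one, mul_one]

theorem hasDerivAt_distortion_term (σ : ℝ) (l : ℤ) (t : ℝ) :
    HasDerivAt (fun t => ∫ n in (l - t - 1 / 2 : ℝ)..(l - t + 1 / 2 : ℝ), (n - l) ^ 2 * gpdf σ n)
      ((t + 1 / 2) ^ 2 * gpdf σ (l - (t + 1 / 2)) - (t - 1 / 2) ^ 2 * gpdf σ (l - (t - 1 / 2)))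
      t := by
  have hg : Continuous fun n : ℝ => (n - l) ^ 2 * gpdf σ n := by fun_prop
  have hlower : HasDerivAt (fun t : ℝ => l - t - 1 / 2) (-1) t :=
    ((hasDerivAt_id t).const_sub _).sub_const _
  have hupper : HasDerivAt (fun t : ℝ => l - t + 1 / 2) (-1) t :=
    ((hasDerivAt_id t).const_sub _).add_const _
  have h := hasDerivAt_integral_of_hasDerivAt_bounds hg hlower hupper
  simp only [smul_eq_mul] at h
  refine h.congr_deriv ?_
  ring_nf

theorem norm_distortion_term_deriv_le (hσ : 0 < σ) (l : ℤ) {R t : ℝ} (ht : |t| ≤ R) :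
    ‖(t + 1 / 2) ^ 2 * gpdf σ (l - (t + 1 / 2)) - (t - 1 / 2) ^ 2 * gpdf σ (l - (t - 1 / 2))‖ ≤
      2 * ((R + 1 / 2) ^ 2 * gpdfMajorant σ (R + 1 / 2) l) := by
  have hplus : |t + 1 / 2| ≤ R + 1 / 2 := (abs_add_le _ _).trans (by norm_num [ht])
  have hminus : |t - 1 / 2| ≤ R + 1 / 2 := (abs_sub _ _).trans (by norm_num [ht])
  calc _ ≤ _ + _ := norm_sub_le _ _
    _ ≤ _ := by linarith [sq_mul_gpdf_sub_le hσ hplus l, sq_mul_gpdf_sub_le hσ hminus l]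

theorem hasDerivAt_distortion (hσ : 0 < σ) (s : ℝ) :
    HasDerivAt (distortion σ) (∑' l : ℤ,
      ((s + 1 / 2) ^ 2 * gpdf σ (l - (s + 1 / 2)) - (s - 1 / 2) ^ 2 * gpdf σ (l - (s - 1 / 2))))
      s := by
  have hs : s ∈ Set.Ioo (-(|s| + 1)) (|s| + 1) := by
    constructor <;> linarith [le_abs_self s, neg_abs_le s]
  refine hasDerivAt_tsum_of_isPreconnected
    (((summable_gpdfMajorant σ _).mul_left _).mul_left 2) isOpen_Ioo isPreconnected_Ioo
    (fun l y _ => hasDerivAt_distortion_term σ l y)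
    (fun l y hy => norm_distortion_term_deriv_le hσ l (abs_le.mpr ⟨hy.1.le, hy.2.le⟩))
    hs ?_ hs
  exact ((summable_gpdfMajorant σ _).mul_left _).of_norm_bounded
    (norm_distortion_term_le hσ · s)

theorem tsum_distortion_term_deriv (hσ : 0 < σ) (t : ℝ) :
    ∑' l : ℤ, ((t + 1 / 2) ^ 2 * gpdf σ (l - (t + 1 / 2)) -
        (t - 1 / 2) ^ 2 * gpdf σ (l - (t - 1 / 2))) =
      2 * t * ∑' l : ℤ, gpdf σ (l - (t - 1 / 2)) := by
  rw [Summable.tsum_sub ((summable_gpdf_sub hσ _).mul_left _)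
      ((summable_gpdf_sub hσ _).mul_left _), tsum_mul_left, tsum_mul_left,
    show t + 1 / 2 = t - 1 / 2 + 1 by ring, tsum_int_comp_sub_add_one]
  ring

end Distortion

/-- The derivative of the pointwise distortion
`δ(s) = Σ_{l∈ℤ} ∫_{l-s-1/2}^{l-s+1/2} (n-l)² φ_σ(n) dn` with respect to `s` equals
`2s Σ_{l∈ℤ} φ_σ(l - s + 1/2)`; in particular `sign(δ'(s)) = sign(s)`. -/
theorem distortion_derivative (σ s : ℝ) (hσ : 0 < σ) :
    HasDerivAt
      (fun t : ℝ =>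
        ∑' l : ℤ, ∫ n in (l - t - 1 / 2 : ℝ)..(l - t + 1 / 2 : ℝ), (n - l) ^ 2 * gpdf σ n)
      (2 * s * ∑' l : ℤ, gpdf σ ((l : ℝ) - s + 1 / 2)) s ∧
    Real.sign
      (deriv
        (fun t : ℝ =>
          ∑' l : ℤ, ∫ n in (l - t - 1 / 2 : ℝ)..(l - t + 1 / 2 : ℝ), (n - l) ^ 2 * gpdf σ n)
        s) = Real.sign s := by
  show HasDerivAt (distortion σ) _ s ∧ Real.sign (deriv (distortion σ) s) = _
  have hderiv : HasDerivAt (distortion σ) (2 * s * ∑' l : ℤ, gpdf σ (l - (s - 1 / 2))) s :=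
    tsum_distortion_term_deriv hσ s ▸ hasDerivAt_distortion hσ s
  have hsum_pos : 0 < ∑' l : ℤ, gpdf σ (l - (s - 1 / 2)) :=
    (summable_gpdf_sub hσ _).tsum_pos (fun _ => (gpdf_pos hσ _).le) 0 (gpdf_pos hσ _)
  have hshift (l : ℤ) : (l : ℝ) - s + 1 / 2 = l - (s - 1 / 2) := by ring
  refine ⟨by simpa only [hshift] using hderiv, ?_⟩
  rw [hderiv.deriv, mul_comm 2 s, mul_assoc]
  exact Real.sign_mul_of_pos_right (by positivity) s
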